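/- Let G be a finite simple connected graph, let u ∈ V(G), and let G' be the graph obtained from G by attaching a new leaf vertex adjacent only to u. Then cdim(G') = cdim(G) + 1 if G forces a 𝟙 representation, and cdim(G') = cdim(G) otherwise. In particular, the value of cdim(G') does not depend on the choice of the attachment vertex u. -/

import Mathlib

open SimpleGraph

namespace ConnDim

open Classical in
/-- The local connectivity `κ(a,b)`: the maximum number of internally vertex-disjoint
`a`-`b` paths, with `κ(a,a) = ∞`. -/
noncomputable def localConn {V : Type*} (G : SimpleGraph V) (a b : V) : ℕ∞ :=
  if a = b then ⊤
  else sSup {n : ℕ∞ | ∃ Ps : Finset (G.Path a b),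
    (∀ p ∈ Ps, ∀ q ∈ Ps, p ≠ q → ∀ x : V,
        x ∈ p.1.support → x ∈ q.1.support → x = a ∨ x = b) ∧
    (Ps.card : ℕ∞) = n}

/-- A set `W` is connectivity resolving if vertices are determined by their
local connectivities to the elements of `W`. -/
def ConnResolving {V : Type*} (G : SimpleGraph V) (W : Set V) : Prop :=
  ∀ u v : V, (∀ w ∈ W, localConn G u w = localConn G v w) → u = v

/-- The connectivity dimension: minimum cardinality of a connectivity resolving set. -/
noncomputable def cdim {V : Type*} (G : SimpleGraph V) : ℕ :=
  sInf {n : ℕ | ∃ W : Set V, ConnResolving G W ∧ W.ncard = n}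

/-- A set `W` is metric resolving if vertices are determined by their distances
to the elements of `W`. -/
def MetricResolving {V : Type*} (G : SimpleGraph V) (W : Set V) : Prop :=
  ∀ u v : V, (∀ w ∈ W, G.dist u w = G.dist v w) → u = v

/-- The metric dimension: minimum cardinality of a metric resolving set. -/
noncomputable def mdim {V : Type*} (G : SimpleGraph V) : ℕ :=
  sInf {n : ℕ | ∃ W : Set V, MetricResolving G W ∧ W.ncard = n}

/-- `G` forces a `𝟙` representation if every minimum resolving set (basis) `B` admits a
vertex whose local connectivity to every element of `B` equals `1`. -/
def ForcesOne {V : Type*} (G : SimpleGraph V) : Prop :=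
  ∀ B : Set V, ConnResolving G B → B.ncard = cdim G →
    ∃ v : V, ∀ b ∈ B, localConn G v b = 1

/-- A cut vertex of a connected graph: its removal disconnects the graph. -/
def IsCutVertex {V : Type*} (G : SimpleGraph V) (v : V) : Prop :=
  G.Connected ∧ ¬ (G.induce {u : V | u ≠ v}).Connected

/-- A block of `G`: a maximal connected subgraph of `G` without a cut vertex of itself. -/
def IsBlock {V : Type*} (G : SimpleGraph V) (H : G.Subgraph) : Prop :=
  H.coe.Connected ∧ (∀ v, ¬ IsCutVertex H.coe v) ∧
  ∀ H' : G.Subgraph, H ≤ H' → H'.coe.Connected → (∀ v, ¬ IsCutVertex H'.coe v) → H' = H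

/-- The number of blocks of `G`. -/
noncomputable def numBlocks {V : Type*} (G : SimpleGraph V) : ℕ :=
  Nat.card {H : G.Subgraph // IsBlock G H}

/-- Two vertices are twins if they have the same neighborhood in the graph with
both of them deleted. -/
def AreTwins {V : Type*} (G : SimpleGraph V) (a b : V) : Prop :=
  ∀ x : V, x ≠ a → x ≠ b → (G.Adj a x ↔ G.Adj b x)

/-- The threshold graph generated by a binary sequence `L` (`false` = isolated vertex,
`true` = dominating vertex): two vertices are adjacent iff the later one was added
as a dominating vertex. -/
def thresholdGraph (L : List Bool) : SimpleGraph (Fin L.length) :=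
  SimpleGraph.fromRel (fun i j => i < j ∧ L.get j = true)

/-- The alternating binary sequence `0,1,0,1,…,0,1` of length `2 * n`. -/
def altList (n : ℕ) : List Bool := (List.replicate n [false, true]).flatten

/-- The join of two graphs on disjoint vertex sets by the bridge `v₁v₂`. -/
def bridgeJoin {V₁ V₂ : Type*} (G₁ : SimpleGraph V₁) (G₂ : SimpleGraph V₂)
    (v₁ : V₁) (v₂ : V₂) : SimpleGraph (V₁ ⊕ V₂) :=
  G₁.map Function.Embedding.inl ⊔ G₂.map Function.Embedding.inr
    ⊔ SimpleGraph.fromEdgeSet {s(Sum.inl v₁, Sum.inr v₂)}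

/-- The graph obtained from `G` by attaching a new leaf (the vertex `none`) to `u`. -/
def attachLeaf {V : Type*} (G : SimpleGraph V) (u : V) : SimpleGraph (Option V) :=
  G.map Function.Embedding.some ⊔ SimpleGraph.fromEdgeSet {s(some u, (none : Option V))}

/-- The chain of `t` triangles (triangle `i` has vertices `inl i.castSucc`, `inl i.succ`,
`inr (inl i)`), with a leaf `inr (inr ())` attached to the end vertex `inl 0`. -/
def triChain (t : ℕ) : SimpleGraph (Fin (t+1) ⊕ Fin t ⊕ Unit) :=
  SimpleGraph.fromRel (fun a b =>
    match a, b with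
    | Sum.inl i, Sum.inl j => (i : ℕ) + 1 = (j : ℕ)
    | Sum.inr (Sum.inl i), Sum.inl j => j = Fin.castSucc i ∨ j = Fin.succ i
    | Sum.inr (Sum.inr _), Sum.inl j => j = 0
    | _, _ => False)

/-!
A pendant vertex has only one neighbour, so it never lies in the interior of a path. Hence
attaching the leaf `none` to `G` changes no local connectivity between old vertices, and the
leaf has local connectivity exactly `1` to every old vertex. Consequently a set `W` resolves
`attachLeaf G u` iff its old part `B` resolves `G` and either `W` contains the leaf or no
vertex of `G` has the all-`1` representation with respect to `B`. A basis of `G` together with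
the leaf always resolves the new graph, and the leaf can be left out exactly when some basis
of `G` admits no all-`1` vertex, that is, when `G` does not force a `𝟙` representation.
-/

theorem _root_.SimpleGraph.Walk.IsPath.notMem_support_of_subsingleton_neighborSet
    {V : Type*} {G : SimpleGraph V} {a b x : V} {p : G.Walk a b} (hp : p.IsPath)
    (hx : (G.neighborSet x).Subsingleton) (ha : x ≠ a) (hb : x ≠ b) : x ∉ p.support := by
  intro hmem
  obtain ⟨i, rfl, hi⟩ := Walk.mem_support_iff_exists_getVert.mp hmem
  have h0 : i ≠ 0 := by rintro rfl; simp at ha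
  have hl : i ≠ p.length := by rintro rfl; simp at hb
  have hprev : G.Adj (p.getVert i) (p.getVert (i - 1)) := by
    simpa [Nat.sub_add_cancel (Nat.pos_of_ne_zero h0)] using
      (p.adj_getVert_succ (i := i - 1) (by omega)).symm
  have hnext : G.Adj (p.getVert i) (p.getVert (i + 1)) := p.adj_getVert_succ (by omega)
  have := hp.getVert_injOn (by simp; omega) (by simp; omega) (hx hprev hnext)
  omega

theorem _root_.SimpleGraph.Walk.exists_map_eq_of_support_subset_range {V W : Type*}
    {G : SimpleGraph V} {H : SimpleGraph W} (f : G ↪g H) {a b : V} (P : H.Walk (f a) (f b))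
    (hP : ∀ x ∈ P.support, x ∈ Set.range f) : ∃ Q : G.Walk a b, Q.map f.toHom = P := by
  suffices ∀ {x y : W} (P : H.Walk x y), (∀ z ∈ P.support, z ∈ Set.range f) →
      ∀ {a b : V} (ha : f a = x) (hb : f b = y),
        ∃ Q : G.Walk a b, Q.map f.toHom = P.copy ha.symm hb.symm by
    simpa using this P hP rfl rfl
  clear hP P a b
  intro x y P hP
  induction P with
  | nil =>
    rintro a b rfl hb
    obtain rfl := f.injective hb
    exact ⟨.nil, rfl⟩
  | cons h P ih =>
    rintro a b rfl rfl
    simp only [Walk.support_cons, List.mem_cons, forall_eq_or_imp] at hP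
    obtain ⟨c, rfl⟩ := hP.2 _ P.start_mem_support
    obtain ⟨Q, hQ⟩ := ih hP.2 rfl rfl
    exact ⟨.cons (f.map_adj_iff.mp h) Q, by simpa using hQ⟩

theorem _root_.SimpleGraph.Path.exists_mapEmbedding_eq {V W : Type*}
    {G : SimpleGraph V} {H : SimpleGraph W} (f : G ↪g H) {a b : V} (p : H.Path (f a) (f b))
    (hp : ∀ x ∈ p.1.support, x ∈ Set.range f) :
    ∃ q : G.Path a b, Path.mapEmbedding f q = p := by
  obtain ⟨Q, hQ⟩ := p.1.exists_map_eq_of_support_subset_range f hp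
  have hQpath : Q.IsPath := (Walk.isPath_map_iff_of_injective f.injective).mp (hQ ▸ p.2)
  exact ⟨⟨Q, hQpath⟩, Subtype.ext hQ⟩

theorem _root_.SimpleGraph.Path.eq_singleton_of_snd_eq {V : Type*} {G : SimpleGraph V}
    {a b : V} (hab : G.Adj a b) (p : G.Path a b) (h : p.1.snd = b) :
    p = Path.singleton hab := by
  obtain ⟨_ | ⟨h', p'⟩, hp⟩ := p
  · exact (G.irrefl hab).elim
  · rw [Walk.snd_cons] at h
    subst h
    obtain rfl : p' = .nil := congrArg Subtype.val (Path.loop_eq ⟨p', hp.of_cons⟩)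
    rfl

section LocalConn

variable {V : Type*} {G : SimpleGraph V} {a b : V}

def IsInternallyDisjoint (Ps : Finset (G.Path a b)) : Prop :=
  ∀ p ∈ Ps, ∀ q ∈ Ps, p ≠ q →
    ∀ x : V, x ∈ p.1.support → x ∈ q.1.support → x = a ∨ x = b

theorem localConn_self (G : SimpleGraph V) (a : V) : localConn G a a = ⊤ :=
  if_pos rfl

theorem localConn_le_iff (hab : a ≠ b) {n : ℕ∞} :
    localConn G a b ≤ n ↔
      ∀ Ps : Finset (G.Path a b), IsInternallyDisjoint Ps → (Ps.card : ℕ∞) ≤ n := by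
  rw [localConn, if_neg hab, sSup_le_iff]
  simp [IsInternallyDisjoint]

theorem card_le_localConn (hab : a ≠ b) {Ps : Finset (G.Path a b)}
    (hPs : IsInternallyDisjoint Ps) : (Ps.card : ℕ∞) ≤ localConn G a b :=
  (localConn_le_iff hab).mp le_rfl Ps hPs

theorem isInternallyDisjoint_map_iff {W : Type*} {H : SimpleGraph W} (f : G ↪g H)
    {Ps : Finset (G.Path a b)} :
    IsInternallyDisjoint (Ps.map ⟨Path.mapEmbedding f, Path.mapEmbedding_injective f a b⟩) ↔
      IsInternallyDisjoint Ps := by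
  simp only [IsInternallyDisjoint, Finset.forall_mem_map, Function.Embedding.coeFn_mk,
    (Path.mapEmbedding_injective f a b).ne_iff, Path.mapEmbedding_coe, Walk.support_map,
    Embedding.coe_toHom, List.mem_map, forall_exists_index, and_imp, forall_apply_eq_imp_iff₂,
    f.injective.eq_iff]
  exact ⟨fun h p hp q hq hpq x hxp hxq => h p hp q hq hpq x hxp x hxq rfl,
    fun h p hp q hq hpq x hxp y hyq hyx => h p hp q hq hpq x hxp (hyx ▸ hyq)⟩

theorem localConn_le_localConn_swap (G : SimpleGraph V) (a b : V) :
    localConn G a b ≤ localConn G b a := by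
  rcases eq_or_ne a b with rfl | hab
  · exact le_rfl
  refine (localConn_le_iff hab).mpr fun Ps hPs => ?_
  have hrev : Function.Injective (Path.reverse : G.Path a b → G.Path b a) := fun p q h =>
    Subtype.ext (Walk.reverse_injective (congrArg Subtype.val h))
  refine Finset.card_map ⟨_, hrev⟩ ▸ card_le_localConn hab.symm ?_
  simp only [IsInternallyDisjoint, Finset.forall_mem_map, Function.Embedding.coeFn_mk,
    hrev.ne_iff, Path.reverse_coe, Walk.support_reverse, List.mem_reverse]
  exact fun p hp q hq hpq x hxp hxq => (hPs p hp q hq hpq x hxp hxq).symm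

theorem localConn_comm (G : SimpleGraph V) (a b : V) : localConn G a b = localConn G b a :=
  (localConn_le_localConn_swap G a b).antisymm (localConn_le_localConn_swap G b a)

theorem localConn_ne_top [Finite V] (hab : a ≠ b) : localConn G a b ≠ ⊤ := by
  classical
  have := Fintype.ofFinite V
  refine (((localConn_le_iff hab).mpr fun Ps _ => ?_).trans_lt
    (ENat.natCast_lt_top (Fintype.card (G.Path a b)))).ne
  exact_mod_cast Ps.card_le_univ

theorem one_le_localConn (hab : a ≠ b) (h : G.Reachable a b) : 1 ≤ localConn G a b := by
  classical
  simpa using card_le_localConn hab (Ps := {h.some.toPath}) (by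
    intro p hp q hq hpq
    simp_all)

theorem localConn_le_one_of_subsingleton_neighborSet (ha : (G.neighborSet a).Subsingleton)
    (hab : a ≠ b) : localConn G a b ≤ 1 := by
  refine (localConn_le_iff hab).mpr fun Ps hPs => ?_
  have hsnd (p : G.Path a b) : G.Adj a p.1.snd := p.1.adj_snd (Walk.not_nil_of_ne hab)
  suffices ∀ p ∈ Ps, ∀ q ∈ Ps, p = q by exact_mod_cast Finset.card_le_one.mpr this
  intro p hp q hq
  by_contra hpq
  have hw : p.1.snd = q.1.snd := ha (hsnd p) (hsnd q)
  have hmem (p : G.Path a b) : p.1.snd ∈ p.1.support := p.1.getVert_mem_support 1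
  rcases hPs p hp q hq hpq _ (hmem p) (by rw [hw]; exact hmem q) with h | h
  · exact (hsnd p).ne h.symm
  · exact hpq ((p.eq_singleton_of_snd_eq (h ▸ hsnd p) h).trans
      (q.eq_singleton_of_snd_eq (h ▸ hsnd p) (hw ▸ h)).symm)

theorem localConn_map_of_forall_support_subset_range {W : Type*} {H : SimpleGraph W}
    (f : G ↪g H) (hf : ∀ p : H.Path (f a) (f b), ∀ x ∈ p.1.support, x ∈ Set.range f) :
    localConn H (f a) (f b) = localConn G a b := by
  rcases eq_or_ne a b with rfl | hab
  · rw [localConn_self, localConn_self]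
  let φ : G.Path a b ↪ H.Path (f a) (f b) :=
    ⟨Path.mapEmbedding f, Path.mapEmbedding_injective f a b⟩
  have hφ : Function.Surjective φ := fun p => p.exists_mapEmbedding_eq f (hf p)
  refine le_antisymm ((localConn_le_iff (f.injective.ne hab)).mpr fun Ps' hPs' => ?_)
    ((localConn_le_iff hab).mpr fun Ps hPs => ?_)
  · obtain ⟨Ps, rfl⟩ : ∃ Ps, Ps.map φ = Ps' :=
      ⟨Ps'.map (Equiv.ofBijective φ ⟨φ.injective, hφ⟩).symm.toEmbedding, by
        rw [Finset.map_map]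
        convert Finset.map_refl
        ext p : 1
        exact (Equiv.ofBijective φ ⟨φ.injective, hφ⟩).apply_symm_apply p⟩
    exact Finset.card_map φ ▸ card_le_localConn hab ((isInternallyDisjoint_map_iff f).mp hPs')
  · exact Finset.card_map φ ▸
      card_le_localConn (f.injective.ne hab) ((isInternallyDisjoint_map_iff f).mpr hPs)

end LocalConn

section Resolving

variable {V : Type*} (G : SimpleGraph V)

theorem connResolving_univ [Finite V] : ConnResolving G Set.univ := by
  intro x y h
  by_contra hxy
  exact localConn_ne_top (Ne.symm hxy) ((localConn_self G x).symm.trans (h x trivial)).symm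

theorem exists_connResolving_ncard_eq_cdim [Finite V] :
    ∃ W : Set V, ConnResolving G W ∧ W.ncard = cdim G := by
  have : {n : ℕ | ∃ W : Set V, ConnResolving G W ∧ W.ncard = n}.Nonempty :=
    ⟨_, Set.univ, connResolving_univ G, rfl⟩
  exact Nat.sInf_mem this

theorem cdim_le_ncard {W : Set V} (hW : ConnResolving G W) : cdim G ≤ W.ncard :=
  Nat.sInf_le ⟨W, hW, rfl⟩

end Resolving

theorem _root_.Set.ncard_preimage_some_le {α : Type*} {s : Set (Option α)} (hs : s.Finite) :
    (some ⁻¹' s).ncard ≤ s.ncard := by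
  rw [← Set.ncard_image_of_injective _ (Option.some_injective α)]
  exact Set.ncard_le_ncard (Set.image_preimage_subset _ _) hs

theorem _root_.Set.ncard_preimage_some_add_one_le {α : Type*} {s : Set (Option α)}
    (hs : s.Finite) (h : none ∈ s) : (some ⁻¹' s).ncard + 1 ≤ s.ncard := by
  have hsub : some '' (some ⁻¹' s) ⊆ s := Set.image_preimage_subset _ _
  rw [← Set.ncard_image_of_injective _ (Option.some_injective α),
    ← Set.ncard_insert_of_notMem (a := none) (by simp) (hs.subset hsub)]
  exact Set.ncard_le_ncard (Set.insert_subset h hsub) hs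

section AttachLeaf

variable {V : Type*} (G : SimpleGraph V) (u : V)

def attachLeafEmbedding : G ↪g attachLeaf G u where
  toEmbedding := Function.Embedding.some
  map_rel_iff' := by
    simp only [attachLeaf, sup_adj, map_adj, fromEdgeSet_adj, Set.mem_singleton_iff, Sym2.eq_iff]
    aesop

@[simp]
theorem attachLeafEmbedding_apply (a : V) : attachLeafEmbedding G u a = some a :=
  rfl

theorem attachLeaf_adj_none_iff {z : Option V} : (attachLeaf G u).Adj none z ↔ z = some u := by
  simp only [attachLeaf, sup_adj, map_adj, fromEdgeSet_adj, Set.mem_singleton_iff, Sym2.eq_iff]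
  aesop

theorem neighborSet_attachLeaf_none : (attachLeaf G u).neighborSet none = {some u} :=
  Set.ext fun _ => attachLeaf_adj_none_iff G u

theorem localConn_attachLeaf_some (a b : V) :
    localConn (attachLeaf G u) (some a) (some b) = localConn G a b :=
  localConn_map_of_forall_support_subset_range (attachLeafEmbedding G u) fun p x hx => by
    cases x with
    | some y => exact ⟨y, rfl⟩
    | none => exact absurd hx (p.2.notMem_support_of_subsingleton_neighborSet
        (by simp [neighborSet_attachLeaf_none]) (by simp) (by simp))

variable {G}

theorem localConn_attachLeaf_none_some (hG : G.Preconnected) (a : V) :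
    localConn (attachLeaf G u) none (some a) = 1 := by
  refine le_antisymm (localConn_le_one_of_subsingleton_neighborSet
    (by simp [neighborSet_attachLeaf_none]) (by simp)) (one_le_localConn (by simp) ?_)
  exact ((attachLeaf_adj_none_iff G u).mpr rfl).reachable.trans
    ((hG u a).map (attachLeafEmbedding G u).toHom)

theorem localConn_attachLeaf_some_none (hG : G.Preconnected) (a : V) :
    localConn (attachLeaf G u) (some a) none = 1 := by
  rw [localConn_comm, localConn_attachLeaf_none_some u hG]

theorem connResolving_attachLeaf_iff (hG : G.Preconnected) {W : Set (Option V)} :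
    ConnResolving (attachLeaf G u) W ↔
      ConnResolving G (some ⁻¹' W) ∧
        (none ∈ W ∨ ∀ v : V, ∃ b ∈ some ⁻¹' W, localConn G v b ≠ 1) := by
  constructor
  · intro hW
    refine ⟨fun x y hxy => Option.some_injective V (hW _ _ ?_), ?_⟩
    · rintro (_ | w) hw
      · rw [localConn_attachLeaf_some_none u hG, localConn_attachLeaf_some_none u hG]
      · simpa only [localConn_attachLeaf_some] using hxy w hw
    · by_contra! h
      obtain ⟨hnone, v, hv⟩ := h
      refine Option.some_ne_none v (hW _ _ ?_)
      rintro (_ | w) hw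
      · exact absurd hw hnone
      · rw [localConn_attachLeaf_some, localConn_attachLeaf_none_some u hG, hv w hw]
  · rintro ⟨hB, hsep⟩
    have hleaf_sep (a : V) : ∃ w ∈ W,
        localConn (attachLeaf G u) (some a) w ≠ localConn (attachLeaf G u) none w := by
      rcases hsep with hnone | hsep
      · refine ⟨none, hnone, ?_⟩
        rw [localConn_attachLeaf_some_none u hG, localConn_self]
        exact ENat.one_ne_top
      · obtain ⟨b, hb, hne⟩ := hsep a
        refine ⟨some b, hb, ?_⟩
        rwa [localConn_attachLeaf_some, localConn_attachLeaf_none_some u hG]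
    rintro (_ | x) (_ | y) hxy
    · rfl
    · obtain ⟨w, hw, hne⟩ := hleaf_sep y
      exact absurd (hxy w hw).symm hne
    · obtain ⟨w, hw, hne⟩ := hleaf_sep x
      exact absurd (hxy w hw) hne
    · exact congrArg some (hB x y fun w hw => by
        simpa only [localConn_attachLeaf_some] using hxy (some w) hw)

theorem cdim_attachLeaf_le_of_not_forcesOne (hG : G.Preconnected) (hF : ¬ ForcesOne G) :
    cdim (attachLeaf G u) ≤ cdim G := by
  simp only [ForcesOne, not_forall, not_exists] at hF
  obtain ⟨B, hB, hcard, hsep⟩ := hF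
  have hW : ConnResolving (attachLeaf G u) (some '' B) :=
    (connResolving_attachLeaf_iff u hG).mpr
      ⟨by rwa [Set.preimage_image_eq _ (Option.some_injective V)], .inr (by simpa using hsep)⟩
  calc cdim (attachLeaf G u) ≤ (some '' B).ncard := cdim_le_ncard _ hW
    _ = cdim G := by rw [Set.ncard_image_of_injective _ (Option.some_injective V), hcard]

variable [Finite V]

theorem cdim_le_cdim_attachLeaf (hG : G.Preconnected) : cdim G ≤ cdim (attachLeaf G u) := by
  obtain ⟨W, hW, hcard⟩ := exists_connResolving_ncard_eq_cdim (attachLeaf G u)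
  calc cdim G ≤ (some ⁻¹' W).ncard :=
        cdim_le_ncard G ((connResolving_attachLeaf_iff u hG).mp hW).1
    _ ≤ W.ncard := Set.ncard_preimage_some_le W.toFinite
    _ = cdim (attachLeaf G u) := hcard

theorem cdim_attachLeaf_le_succ (hG : G.Preconnected) :
    cdim (attachLeaf G u) ≤ cdim G + 1 := by
  obtain ⟨B, hB, hcard⟩ := exists_connResolving_ncard_eq_cdim G
  have hW : ConnResolving (attachLeaf G u) (insert none (some '' B)) :=
    (connResolving_attachLeaf_iff u hG).mpr
      ⟨by convert hB using 1; ext; simp, .inl (Set.mem_insert _ _)⟩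
  calc cdim (attachLeaf G u) ≤ (insert none (some '' B)).ncard := cdim_le_ncard _ hW
    _ = cdim G + 1 := by
      rw [Set.ncard_insert_of_notMem (by simp),
        Set.ncard_image_of_injective _ (Option.some_injective V), hcard]

theorem cdim_lt_cdim_attachLeaf (hG : G.Preconnected) (hF : ForcesOne G) :
    cdim G < cdim (attachLeaf G u) := by
  obtain ⟨W, hW, hcard⟩ := exists_connResolving_ncard_eq_cdim (attachLeaf G u)
  obtain ⟨hB, hsep⟩ := (connResolving_attachLeaf_iff u hG).mp hW
  have hBcard := cdim_le_ncard G hB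
  by_contra! hle
  rcases hsep with hnone | hsep
  · have := Set.ncard_preimage_some_add_one_le W.toFinite hnone
    omega
  · have := Set.ncard_preimage_some_le W.toFinite
    obtain ⟨v, hv⟩ := hF _ hB (by omega)
    obtain ⟨b, hb, hne⟩ := hsep v
    exact hne (hv b hb)

theorem cdim_attachLeaf_of_forcesOne (hG : G.Preconnected) (hF : ForcesOne G) :
    cdim (attachLeaf G u) = cdim G + 1 :=
  (cdim_attachLeaf_le_succ u hG).antisymm (cdim_lt_cdim_attachLeaf u hG hF)

theorem cdim_attachLeaf_of_not_forcesOne (hG : G.Preconnected) (hF : ¬ ForcesOne G) :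
    cdim (attachLeaf G u) = cdim G :=
  (cdim_attachLeaf_le_of_not_forcesOne u hG hF).antisymm (cdim_le_cdim_attachLeaf u hG)

end AttachLeaf

/-- attaching a leaf to a connected graph `G` increases `cdim` by one if `G`
forces a `𝟙` representation and leaves it unchanged otherwise; in particular the value
does not depend on the attachment vertex. -/
theorem stmt15 {V : Type*} [Fintype V] (G : SimpleGraph V) (hG : G.Connected) (u : V) :
    (ForcesOne G → cdim (attachLeaf G u) = cdim G + 1) ∧
    (¬ ForcesOne G → cdim (attachLeaf G u) = cdim G) ∧
    (∀ u' : V, cdim (attachLeaf G u') = cdim (attachLeaf G u)) := by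
  have hG' := hG.preconnected
  refine ⟨cdim_attachLeaf_of_forcesOne u hG', cdim_attachLeaf_of_not_forcesOne u hG',
    fun u' => ?_⟩
  by_cases hF : ForcesOne G
  · rw [cdim_attachLeaf_of_forcesOne u' hG' hF, cdim_attachLeaf_of_forcesOne u hG' hF]
  · rw [cdim_attachLeaf_of_not_forcesOne u' hG' hF, cdim_attachLeaf_of_not_forcesOne u hG' hF]

end ConnDim
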